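/- Let A be a unital C*-algebra and τ : A → ℂ a faithful positive tracial continuous linear functional. If a positive linear map E : A → A preserves τ-fidelity and is surjective, then E is an order isomorphism: E is bijective and the inverse linear map E⁻¹ is also positive. -/

import Mathlib

open scoped ComplexOrder ComplexStarModule

/-! For positive `a`, `b` a faithful trace detects vanishing fidelity: `F_τ(a, b) = 0` iff
`a * b = 0`. Normalising to τ-states, a fidelity-preserving positive map `E` therefore sends
orthogonal positive elements to orthogonal ones. If `x` is self-adjoint and `E x ≥ 0`, then
`0 ≤ E x⁻ ≤ E x⁺` and `E x⁺ * E x⁻ = 0`, which forces `E x⁻ = 0`; as `τ ∘ E = τ` is faithful,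
`x⁻ = 0` and `x ≥ 0`. So `E` reflects positivity of self-adjoint elements. Applied to `±x` this
gives injectivity, and since positive maps are ⋆-preserving, `E x ≥ 0` forces `x` to be
self-adjoint in the first place. -/

/-- The absolute value `|x| = (star x * x)^{1/2}` of an element of a C*-algebra,
defined via the continuous functional calculus square root. -/
noncomputable def cstarAbs {A : Type*} [CStarAlgebra A] [PartialOrder A] [StarOrderedRing A]
    (x : A) : A :=
  CFC.sqrt (star x * x)

/-- The τ-fidelity `F_τ(σ, ρ) = τ(|σ^{1/2} ρ^{1/2}|)`, as a real number. -/
noncomputable def fidelity {A : Type*} [CStarAlgebra A] [PartialOrder A] [StarOrderedRing A]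
    (τ : A →L[ℂ] ℂ) (σ ρ : A) : ℝ :=
  (τ (cstarAbs (CFC.sqrt σ * CFC.sqrt ρ))).re

lemma IsSelfAdjoint.mul_eq_zero_comm {R : Type*} [NonUnitalRing R] [StarRing R] {a b : R}
    (ha : IsSelfAdjoint a) (hb : IsSelfAdjoint b) : a * b = 0 ↔ b * a = 0 := by
  constructor <;> intro h <;> simpa [ha.star_eq, hb.star_eq] using congrArg star h

lemma IsSelfAdjoint.mul_eq_zero_of_mul_mul_self_eq_zero {R : Type*} [NonUnitalNormedRing R]
    [StarRing R] [CStarRing R] {a w : R} (ha : IsSelfAdjoint a)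
    (hw : IsSelfAdjoint w) (h : a * (w * w) = 0) : a * w = 0 := by
  rw [← CStarRing.mul_star_self_eq_zero_iff, star_mul, hw.star_eq, ha.star_eq]
  calc a * w * (w * a) = a * (w * w) * a := by simp only [mul_assoc]
    _ = 0 := by rw [h, zero_mul]

section Orthogonality

variable {A : Type*} [NonUnitalCStarAlgebra A] [PartialOrder A] [StarOrderedRing A]

lemma sqrt_mul_sqrt_eq_zero_iff {a b : A} (ha : 0 ≤ a) (hb : 0 ≤ b) :
    CFC.sqrt a * CFC.sqrt b = 0 ↔ a * b = 0 := by
  have hsa := (CFC.sqrt_nonneg a).isSelfAdjoint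
  have hsb := (CFC.sqrt_nonneg b).isSelfAdjoint
  constructor
  · intro h
    calc a * b = CFC.sqrt a * (CFC.sqrt a * CFC.sqrt b) * CFC.sqrt b := by
          conv_lhs => rw [← CFC.sqrt_mul_sqrt_self a ha, ← CFC.sqrt_mul_sqrt_self b hb]
          simp only [mul_assoc]
      _ = 0 := by rw [h, mul_zero, zero_mul]
  · intro hab
    have hba : CFC.sqrt b * a = 0 := (ha.isSelfAdjoint.mul_eq_zero_comm hsb).mp <|
      ha.isSelfAdjoint.mul_eq_zero_of_mul_mul_self_eq_zero hsb
        (by rwa [CFC.sqrt_mul_sqrt_self b hb])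
    exact (hsb.mul_eq_zero_comm hsa).mp <|
      hsb.mul_eq_zero_of_mul_mul_self_eq_zero hsa (by rwa [CFC.sqrt_mul_sqrt_self a ha])

lemma eq_zero_of_le_of_mul_eq_zero {a b : A} (hb : 0 ≤ b) (hba : b ≤ a) (hab : a * b = 0) :
    b = 0 := by
  have ha : IsSelfAdjoint a := (hb.trans hba).isSelfAdjoint
  obtain ⟨w, hw, rfl⟩ := CStarAlgebra.nonneg_iff_exists_isSelfAdjoint_and_eq_mul_self.mp hb
  have hwa : w * a = 0 :=
    (ha.mul_eq_zero_comm hw).mp (ha.mul_eq_zero_of_mul_mul_self_eq_zero hw hab)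
  have hsq : star (w * w) * (w * w) ≤ 0 :=
    calc star (w * w) * (w * w) = star w * (w * w) * w := by
          simp only [star_mul, hw.star_eq, mul_assoc]
      _ ≤ star w * a * w := star_left_conjugate_le_conjugate hba w
      _ = 0 := by rw [hw.star_eq, hwa, zero_mul]
  exact (CStarRing.star_mul_self_eq_zero_iff _).mp (le_antisymm hsq (star_mul_self_nonneg _))

end Orthogonality

lemma cstarAbs_eq_zero_iff {A : Type*} [CStarAlgebra A] [PartialOrder A] [StarOrderedRing A]
    {x : A} : cstarAbs x = 0 ↔ x = 0 := by
  rw [cstarAbs, CFC.sqrt_eq_zero_iff _ (star_mul_self_nonneg x),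
    CStarRing.star_mul_self_eq_zero_iff]

section FaithfulTrace

variable {A : Type*} [CStarAlgebra A] [PartialOrder A] [StarOrderedRing A] {τ : A →L[ℂ] ℂ}

lemma apply_nonneg_of_nonneg (hpos : ∀ x : A, 0 ≤ τ (star x * x)) {a : A} (ha : 0 ≤ a) :
    0 ≤ τ a := by
  obtain ⟨b, rfl⟩ := CStarAlgebra.nonneg_iff_eq_star_mul_self.mp ha
  exact hpos b

lemma apply_eq_zero_iff_of_nonneg (hfaith : ∀ x : A, τ (star x * x) = 0 → x = 0) {a : A}
    (ha : 0 ≤ a) : τ a = 0 ↔ a = 0 := by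
  refine ⟨fun h => ?_, fun h => by rw [h, map_zero]⟩
  obtain ⟨b, rfl⟩ := CStarAlgebra.nonneg_iff_eq_star_mul_self.mp ha
  rw [hfaith b h, star_zero, zero_mul]

lemma fidelity_eq_zero_iff (hpos : ∀ x : A, 0 ≤ τ (star x * x))
    (hfaith : ∀ x : A, τ (star x * x) = 0 → x = 0) {a b : A} (ha : 0 ≤ a) (hb : 0 ≤ b) :
    fidelity τ a b = 0 ↔ a * b = 0 := by
  set y := CFC.sqrt a * CFC.sqrt b
  have habs : 0 ≤ cstarAbs y := CFC.sqrt_nonneg _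
  have him : 0 = (τ (cstarAbs y)).im :=
    (Complex.nonneg_iff.mp (apply_nonneg_of_nonneg hpos habs)).2
  calc fidelity τ a b = 0 ↔ τ (cstarAbs y) = 0 := by
        change (τ (cstarAbs y)).re = 0 ↔ _
        rw [Complex.ext_iff, ← him]
        simp
    _ ↔ a * b = 0 := by
        rw [apply_eq_zero_iff_of_nonneg hfaith habs, cstarAbs_eq_zero_iff,
          sqrt_mul_sqrt_eq_zero_iff ha hb]

end FaithfulTrace

namespace PositiveLinearMap

variable {A B : Type*} [CStarAlgebra A] [PartialOrder A] [StarOrderedRing A]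
  [CStarAlgebra B] [PartialOrder B] {Φ : A →ₚ[ℂ] B}

lemma eq_zero_of_isSelfAdjoint_of_map_eq_zero (hΦ : ∀ x, IsSelfAdjoint x → 0 ≤ Φ x → 0 ≤ x)
    {s : A} (hs : IsSelfAdjoint s) (h : Φ s = 0) : s = 0 :=
  le_antisymm (neg_nonneg.mp (hΦ _ hs.neg (by rw [map_neg, h, neg_zero]))) (hΦ s hs h.ge)

variable [StarOrderedRing B]

lemma nonneg_of_map_nonneg (hΦ : ∀ x, IsSelfAdjoint x → 0 ≤ Φ x → 0 ≤ x) {x : A}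
    (h : 0 ≤ Φ x) : 0 ≤ x := by
  have hℑ : Φ (ℑ x : A) = 0 := by
    rw [map_imaginaryPart, imaginaryPart_eq_zero_iff.mpr h.isSelfAdjoint, ZeroMemClass.coe_zero]
  have hx : ℑ x = 0 :=
    Subtype.ext (eq_zero_of_isSelfAdjoint_of_map_eq_zero hΦ (ℑ x).property hℑ)
  exact hΦ x (imaginaryPart_eq_zero_iff.mp hx) h

lemma injective_of_nonneg_of_map_nonneg (hΦ : ∀ x, IsSelfAdjoint x → 0 ≤ Φ x → 0 ≤ x) :
    Function.Injective Φ := by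
  refine (injective_iff_map_eq_zero Φ).mpr fun z hz => le_antisymm ?_ ?_
  · exact neg_nonneg.mp (nonneg_of_map_nonneg hΦ (by rw [map_neg, hz, neg_zero]))
  · exact nonneg_of_map_nonneg hΦ hz.ge

end PositiveLinearMap

section FidelityPreserving

variable {A : Type*} [CStarAlgebra A] [PartialOrder A] [StarOrderedRing A] {τ : A →L[ℂ] ℂ}
  {Φ : A →ₚ[ℂ] A}

lemma map_mul_map_eq_zero_of_preserves_fidelity (hpos : ∀ x : A, 0 ≤ τ (star x * x))
    (hfaith : ∀ x : A, τ (star x * x) = 0 → x = 0)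
    (hΦfid : ∀ σ ρ : A, 0 ≤ σ → τ σ = 1 → 0 ≤ ρ → τ ρ = 1 →
      fidelity τ (Φ σ) (Φ ρ) = fidelity τ σ ρ)
    {a b : A} (ha : 0 ≤ a) (hb : 0 ≤ b) (hab : a * b = 0) : Φ a * Φ b = 0 := by
  rcases eq_or_ne (τ a) 0 with hτa | hτa
  · rw [(apply_eq_zero_iff_of_nonneg hfaith ha).mp hτa, map_zero, zero_mul]
  rcases eq_or_ne (τ b) 0 with hτb | hτb
  · rw [(apply_eq_zero_iff_of_nonneg hfaith hb).mp hτb, map_zero, mul_zero]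
  have hσ : 0 ≤ (τ a)⁻¹ • a := smul_nonneg (inv_nonneg.mpr (apply_nonneg_of_nonneg hpos ha)) ha
  have hρ : 0 ≤ (τ b)⁻¹ • b := smul_nonneg (inv_nonneg.mpr (apply_nonneg_of_nonneg hpos hb)) hb
  have hfid := hΦfid _ _ hσ (by rw [map_smul, smul_eq_mul, inv_mul_cancel₀ hτa])
    hρ (by rw [map_smul, smul_eq_mul, inv_mul_cancel₀ hτb])
  rw [(fidelity_eq_zero_iff hpos hfaith hσ hρ).mpr (by rw [smul_mul_smul_comm, hab, smul_zero]),
    fidelity_eq_zero_iff hpos hfaith (Φ.map_nonneg hσ) (Φ.map_nonneg hρ), map_smul, map_smul,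
    smul_mul_smul_comm] at hfid
  exact (smul_eq_zero.mp hfid).resolve_left (mul_ne_zero (inv_ne_zero hτa) (inv_ne_zero hτb))

lemma nonneg_of_isSelfAdjoint_of_map_nonneg (hpos : ∀ x : A, 0 ≤ τ (star x * x))
    (hfaith : ∀ x : A, τ (star x * x) = 0 → x = 0) (hΦτ : ∀ x : A, τ (Φ x) = τ x)
    (hΦfid : ∀ σ ρ : A, 0 ≤ σ → τ σ = 1 → 0 ≤ ρ → τ ρ = 1 →
      fidelity τ (Φ σ) (Φ ρ) = fidelity τ σ ρ)
    {x : A} (hx : IsSelfAdjoint x) (h : 0 ≤ Φ x) : 0 ≤ x := by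
  have hle : Φ x⁻ ≤ Φ x⁺ := by
    rwa [← sub_nonneg, ← map_sub, CFC.posPart_sub_negPart x hx]
  have horth : Φ x⁺ * Φ x⁻ = 0 :=
    map_mul_map_eq_zero_of_preserves_fidelity hpos hfaith hΦfid (CFC.posPart_nonneg x)
      (CFC.negPart_nonneg x) (CFC.posPart_mul_negPart x)
  have hΦneg : Φ x⁻ = 0 :=
    eq_zero_of_le_of_mul_eq_zero (Φ.map_nonneg (CFC.negPart_nonneg x)) hle horth
  have hneg : x⁻ = 0 := by
    rw [← apply_eq_zero_iff_of_nonneg hfaith (CFC.negPart_nonneg x), ← hΦτ, hΦneg, map_zero]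
  exact CStarAlgebra.nonneg_iff_isSelfAdjoint_and_negPart_eq_zero.mpr ⟨hx, hneg⟩

end FidelityPreserving

theorem order_isomorphism_of_surjective_preserves_fidelity_general
    {A : Type*} [CStarAlgebra A] [PartialOrder A] [StarOrderedRing A]
    (τ : A →L[ℂ] ℂ)
    (hpos : ∀ x : A, 0 ≤ τ (star x * x))
    (hfaith : ∀ x : A, τ (star x * x) = 0 → x = 0)
    (E : A →ₗ[ℂ] A)
    (hE : ∀ x : A, 0 ≤ x → 0 ≤ E x)
    (hEτ : ∀ x : A, τ (E x) = τ x)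
    (hEfid : ∀ σ ρ : A, 0 ≤ σ → τ σ = 1 → 0 ≤ ρ → τ ρ = 1 →
      fidelity τ (E σ) (E ρ) = fidelity τ σ ρ)
    (hsurj : Function.Surjective E) :
    Function.Bijective E ∧ ∀ x : A, 0 ≤ E x → 0 ≤ x := by
  let Φ : A →ₚ[ℂ] A := .mk₀ E hE
  have hΦ : ∀ x, IsSelfAdjoint x → 0 ≤ Φ x → 0 ≤ x := fun _ =>
    nonneg_of_isSelfAdjoint_of_map_nonneg hpos hfaith hEτ hEfid
  exact ⟨⟨Φ.injective_of_nonneg_of_map_nonneg hΦ, hsurj⟩, fun _ => Φ.nonneg_of_map_nonneg hΦ⟩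

/-- a surjective positive linear map preserving τ-fidelity is an order
isomorphism: it is bijective and its inverse is positive. -/
theorem order_isomorphism_of_surjective_preserves_fidelity
    {A : Type*} [CStarAlgebra A] [PartialOrder A] [StarOrderedRing A]
    (τ : A →L[ℂ] ℂ)
    (htr : ∀ x y : A, τ (x * y) = τ (y * x))
    (hpos : ∀ x : A, 0 ≤ τ (star x * x))
    (hfaith : ∀ x : A, τ (star x * x) = 0 → x = 0)
    (E : A →ₗ[ℂ] A)
    (hE : ∀ x : A, 0 ≤ x → 0 ≤ E x)
    (hEτ : ∀ x : A, τ (E x) = τ x)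
    (hEfid : ∀ σ ρ : A, 0 ≤ σ → τ σ = 1 → 0 ≤ ρ → τ ρ = 1 →
      fidelity τ (E σ) (E ρ) = fidelity τ σ ρ)
    (hsurj : Function.Surjective E) :
    Function.Bijective E ∧ ∀ x : A, 0 ≤ E x → 0 ≤ x :=
  order_isomorphism_of_surjective_preserves_fidelity_general τ hpos hfaith E hE hEτ hEfid hsurj
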